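/- Let c be a generic linear list, f its piecewise linear map, and i an interior local maximum of c. Let s < c_i ≤ t be real numbers such that no item value other than c_i lies in the closed interval [s, t]. Then the number of connected components of f^{-1}((−∞, t]) equals the number of connected components of f^{-1}((−∞, s]) minus one. -/

import Mathlib

/-- The piecewise linear map determined by the list `c` (on the domain `[1,m]`). -/
noncomputable def plMap (c : ℕ → ℝ) (x : ℝ) : ℝ :=
  c (Int.floor x).toNat +
    (x - (Int.floor x : ℝ)) * (c ((Int.floor x).toNat + 1) - c (Int.floor x).toNat)

/-- The set of points of the domain `[1,m]` with values in `[A,B]`. -/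
def levelBand (m : ℕ) (c : ℕ → ℝ) (A B : ℝ) : Set ℝ :=
  {x : ℝ | x ∈ Set.Icc (1 : ℝ) (m : ℝ) ∧ plMap c x ∈ Set.Icc A B}

/-- The sublevel set of the map at `s`, within the domain `[1,m]`. -/
def sublevel (m : ℕ) (c : ℕ → ℝ) (s : ℝ) : Set ℝ :=
  {x : ℝ | x ∈ Set.Icc (1 : ℝ) (m : ℝ) ∧ plMap c x ≤ s}

/-- The support of the frame spanned by the items `a` and `b`: the connected component
of `f⁻¹([f a, f b])` (within the domain) containing `a`. -/
def frameSupport (m : ℕ) (c : ℕ → ℝ) (a b : ℕ) : Set ℝ :=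
  connectedComponentIn (levelBand m c (c a) (c b)) (a : ℝ)

/-- `W(a,b)` is a triple-panel window of the piecewise linear map of `c`:
`a` and `b` are items with `c a < c b` lying in a common connected component `[x,y]`
of `f⁻¹([c a, c b])`, and the value at the end of the support away from the mirror
equals `c a`. -/
def IsTPW (m : ℕ) (c : ℕ → ℝ) (a b : ℕ) : Prop :=
  1 ≤ a ∧ a ≤ m ∧ 1 ≤ b ∧ b ≤ m ∧ c a < c b ∧
  (b : ℝ) ∈ frameSupport m c a b ∧
  (if a < b then plMap c (sSup (frameSupport m c a b)) = c a
   else plMap c (sInf (frameSupport m c a b)) = c a)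

/-- `i` is an interior local minimum of the list `c`. -/
def IsLocMin (m : ℕ) (c : ℕ → ℝ) (i : ℕ) : Prop :=
  1 < i ∧ i < m ∧ c i < c (i - 1) ∧ c i < c (i + 1)

/-- `i` is an interior local maximum of the list `c`. -/
def IsLocMax (m : ℕ) (c : ℕ → ℝ) (i : ℕ) : Prop :=
  1 < i ∧ i < m ∧ c (i - 1) < c i ∧ c (i + 1) < c i

/-- `i` is a critical item that is a leaf: an endpoint or an interior local minimum. -/
def IsCritLeaf (m : ℕ) (c : ℕ → ℝ) (i : ℕ) : Prop :=
  i = 1 ∨ i = m ∨ IsLocMin m c i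

/-- `i` is a critical item of the list `c`. -/
def IsCritItem (m : ℕ) (c : ℕ → ℝ) (i : ℕ) : Prop :=
  IsCritLeaf m c i ∨ IsLocMax m c i

/-- The set of connected components of `S`. -/
def componentsOf (S : Set ℝ) : Set (Set ℝ) :=
  {C | ∃ x ∈ S, C = connectedComponentIn S x}

/-!
On each edge `[k, k+1]` the map `f` is affine, hence monotone or antitone, so every connected
component of the sublevel set `{f ≤ u}` contains an item, and its leftmost item `k` is a
*run start*: `c k ≤ u`, and `k = 1` or `c (k-1) > u`. Distinct run starts lie in distinct
components, since the item just left of the later one is not in the sublevel set. So the components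
are counted by the run starts. By the gap hypothesis, raising the level from `s` to `t` moves only
the item `i` below the level; both its neighbours already are, so the runs ending at `i - 1` and
starting at `i + 1` merge: `i + 1` stops being a run start and nothing else changes.
-/

open Set

lemma plMap_natCast (c : ℕ → ℝ) (n : ℕ) : plMap c n = c n := by
  simp [plMap]

lemma plMap_of_mem_Icc (c : ℕ → ℝ) (k : ℕ) {x : ℝ} (hx : x ∈ Icc (k : ℝ) (k + 1)) :
    plMap c x = c k + (x - k) * (c (k + 1) - c k) := by
  rcases hx.2.eq_or_lt with rfl | hlt
  · rw [← Nat.cast_succ, plMap_natCast]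
    push_cast
    ring
  · have hfloor : ⌊x⌋ = (k : ℤ) :=
      Int.floor_eq_iff.2 ⟨by exact_mod_cast hx.1, by exact_mod_cast hlt⟩
    simp [plMap, hfloor]

lemma monotoneOn_plMap_or_antitoneOn (c : ℕ → ℝ) (k : ℕ) :
    MonotoneOn (plMap c) (Icc (k : ℝ) (k + 1)) ∨ AntitoneOn (plMap c) (Icc (k : ℝ) (k + 1)) := by
  rcases le_total 0 (c (k + 1) - c k) with hd | hd
  · refine Or.inl fun x hx y hy hxy => ?_
    rw [plMap_of_mem_Icc c k hx, plMap_of_mem_Icc c k hy]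
    nlinarith
  · refine Or.inr fun x hx y hy hxy => ?_
    rw [plMap_of_mem_Icc c k hx, plMap_of_mem_Icc c k hy]
    nlinarith

lemma natCast_mem_sublevel {m k : ℕ} {c : ℕ → ℝ} {u : ℝ} (h1 : 1 ≤ k) (hm : k ≤ m)
    (hu : c k ≤ u) : (k : ℝ) ∈ sublevel m c u :=
  ⟨⟨by exact_mod_cast h1, by exact_mod_cast hm⟩, by rwa [plMap_natCast]⟩

lemma Icc_subset_sublevel {m k : ℕ} {c : ℕ → ℝ} {u a b : ℝ} (ha : a ∈ sublevel m c u)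
    (hb : b ∈ sublevel m c u) (hka : (k : ℝ) ≤ a) (hbk : b ≤ k + 1) :
    Icc a b ⊆ sublevel m c u := by
  rintro y ⟨hay, hyb⟩
  refine ⟨⟨ha.1.1.trans hay, hyb.trans hb.1.2⟩, ?_⟩
  have hedge : ∀ z, a ≤ z → z ≤ b → z ∈ Icc (k : ℝ) (k + 1) :=
    fun z haz hzb => ⟨hka.trans haz, hzb.trans hbk⟩
  rcases monotoneOn_plMap_or_antitoneOn c k with hmono | hanti
  · exact (hmono (hedge y hay hyb) (hedge b (hay.trans hyb) le_rfl) hyb).trans hb.2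
  · exact (hanti (hedge a le_rfl (hay.trans hyb)) (hedge y hay hyb) hay).trans ha.2

lemma connectedComponentIn_eq_of_Icc_subset {S : Set ℝ} {a b : ℝ} (hab : a ≤ b)
    (h : Icc a b ⊆ S) : connectedComponentIn S a = connectedComponentIn S b :=
  connectedComponentIn_eq <|
    isPreconnected_Icc.subset_connectedComponentIn (left_mem_Icc.2 hab) h (right_mem_Icc.2 hab)

lemma exists_natCast_connectedComponentIn_sublevel_eq {m : ℕ} {c : ℕ → ℝ} {u x : ℝ}
    (hx : x ∈ sublevel m c u) : ∃ j : ℕ, 1 ≤ j ∧ j ≤ m ∧ c j ≤ u ∧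
      connectedComponentIn (sublevel m c u) x = connectedComponentIn (sublevel m c u) j := by
  obtain ⟨⟨hx1, hxm⟩, hxu⟩ := hx
  rcases hxm.eq_or_lt with rfl | hlt
  · exact ⟨m, by exact_mod_cast hx1, le_rfl, by rwa [plMap_natCast] at hxu, rfl⟩
  set k := ⌊x⌋₊
  have hkx : (k : ℝ) ≤ x := Nat.floor_le (by linarith)
  have hxk : x ≤ k + 1 := (Nat.lt_floor_add_one x).le
  have hk1 : 1 ≤ k := Nat.le_floor (by exact_mod_cast hx1)
  have hkm : k < m := (Nat.floor_lt (by linarith)).2 hlt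
  rcases monotoneOn_plMap_or_antitoneOn c k with hmono | hanti
  · have hck : c k ≤ u := by
      rw [← plMap_natCast c k]
      exact (hmono (left_mem_Icc.2 (by linarith)) ⟨hkx, hxk⟩ hkx).trans hxu
    refine ⟨k, hk1, hkm.le, hck, (connectedComponentIn_eq_of_Icc_subset hkx ?_).symm⟩
    exact Icc_subset_sublevel (natCast_mem_sublevel hk1 hkm.le hck) ⟨⟨hx1, hxm⟩, hxu⟩ le_rfl hxk
  · have hck : c (k + 1) ≤ u := by
      rw [← plMap_natCast c (k + 1), Nat.cast_succ]
      exact (hanti ⟨hkx, hxk⟩ (right_mem_Icc.2 (by linarith)) hxk).trans hxu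
    refine ⟨k + 1, by omega, hkm, hck, ?_⟩
    rw [Nat.cast_succ]
    refine connectedComponentIn_eq_of_Icc_subset hxk <|
      Icc_subset_sublevel ⟨⟨hx1, hxm⟩, hxu⟩ ?_ hkx le_rfl
    simpa using natCast_mem_sublevel (by omega) hkm hck

def runStarts (m : ℕ) (c : ℕ → ℝ) (u : ℝ) : Set ℕ :=
  {k | 1 ≤ k ∧ k ≤ m ∧ c k ≤ u ∧ (k = 1 ∨ u < c (k - 1))}

lemma runStarts_finite (m : ℕ) (c : ℕ → ℝ) (u : ℝ) : (runStarts m c u).Finite :=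
  (finite_Iic m).subset fun _ hk => hk.2.1

lemma add_one_notMem_runStarts {m k : ℕ} {c : ℕ → ℝ} {u : ℝ} (hk1 : 1 ≤ k) (hk : c k ≤ u) :
    k + 1 ∉ runStarts m c u := by
  rintro ⟨-, -, -, h | h⟩
  · omega
  · simp only [Nat.add_sub_cancel] at h
    linarith

lemma exists_runStart_Icc_subset_sublevel {m : ℕ} {c : ℕ → ℝ} {u : ℝ} (j : ℕ) (hj1 : 1 ≤ j)
    (hjm : j ≤ m) (hju : c j ≤ u) :
    ∃ k ∈ runStarts m c u, k ≤ j ∧ Icc (k : ℝ) j ⊆ sublevel m c u := by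
  induction j, hj1 using Nat.le_induction with
  | base =>
    refine ⟨1, ⟨le_rfl, hjm, hju, Or.inl rfl⟩, le_rfl, ?_⟩
    rw [Icc_self, singleton_subset_iff]
    exact natCast_mem_sublevel le_rfl hjm hju
  | succ n hn ih =>
    by_cases hstart : u < c n
    · refine ⟨n + 1, ⟨by omega, hjm, hju, Or.inr (by simpa using hstart)⟩, le_rfl, ?_⟩
      rw [Icc_self, singleton_subset_iff]
      exact natCast_mem_sublevel (by omega) hjm hju
    · have hcn : c n ≤ u := not_lt.1 hstart
      obtain ⟨k, hk, hkn, hsub⟩ := ih (by omega) hcn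
      refine ⟨k, hk, by omega, ?_⟩
      have hedge : Icc (n : ℝ) ((n + 1 : ℕ) : ℝ) ⊆ sublevel m c u :=
        Icc_subset_sublevel (natCast_mem_sublevel hn (by omega) hcn)
          (natCast_mem_sublevel (by omega) hjm hju) le_rfl (by push_cast; rfl)
      rw [← Icc_union_Icc_eq_Icc (Nat.cast_le.2 hkn) (Nat.cast_le.2 n.le_succ)]
      exact union_subset hsub hedge

lemma connectedComponentIn_sublevel_ne_of_runStarts {m : ℕ} {c : ℕ → ℝ} {u : ℝ} {k k' : ℕ}
    (hk : k ∈ runStarts m c u) (hk' : k' ∈ runStarts m c u) (hlt : k < k') :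
    connectedComponentIn (sublevel m c u) k ≠ connectedComponentIn (sublevel m c u) k' := by
  intro heq
  obtain ⟨hk'1, hk'm, hk'u, hk'start⟩ := hk'
  have hu : u < c (k' - 1) := hk'start.resolve_left (by have := hk.1; omega)
  have hIcc : Icc (k : ℝ) k' ⊆ connectedComponentIn (sublevel m c u) k :=
    isPreconnected_connectedComponentIn.Icc_subset
      (mem_connectedComponentIn (natCast_mem_sublevel hk.1 hk.2.1 hk.2.2.1))
      (heq ▸ mem_connectedComponentIn (natCast_mem_sublevel hk'1 hk'm hk'u))
  have hmem : ((k' - 1 : ℕ) : ℝ) ∈ sublevel m c u :=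
    connectedComponentIn_subset _ _ <|
      hIcc ⟨Nat.cast_le.2 (Nat.le_sub_one_of_lt hlt), Nat.cast_le.2 (Nat.sub_le k' 1)⟩
  have hval := hmem.2
  rw [plMap_natCast] at hval
  linarith

lemma injOn_connectedComponentIn_sublevel_runStarts (m : ℕ) (c : ℕ → ℝ) (u : ℝ) :
    InjOn (fun k : ℕ => connectedComponentIn (sublevel m c u) k) (runStarts m c u) := by
  intro k hk k' hk' heq
  by_contra hne
  rcases lt_or_gt_of_ne hne with hlt | hlt
  · exact connectedComponentIn_sublevel_ne_of_runStarts hk hk' hlt heq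
  · exact connectedComponentIn_sublevel_ne_of_runStarts hk' hk hlt heq.symm

lemma componentsOf_sublevel_eq_image (m : ℕ) (c : ℕ → ℝ) (u : ℝ) :
    componentsOf (sublevel m c u) =
      (fun k : ℕ => connectedComponentIn (sublevel m c u) k) '' runStarts m c u := by
  apply Subset.antisymm
  · rintro C ⟨x, hx, rfl⟩
    obtain ⟨j, hj1, hjm, hju, hxj⟩ := exists_natCast_connectedComponentIn_sublevel_eq hx
    obtain ⟨k, hk, hkj, hsub⟩ := exists_runStart_Icc_subset_sublevel j hj1 hjm hju
    exact ⟨k, hk, (connectedComponentIn_eq_of_Icc_subset (Nat.cast_le.2 hkj) hsub).trans hxj.symm⟩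
  · rintro C ⟨k, hk, rfl⟩
    exact ⟨k, natCast_mem_sublevel hk.1 hk.2.1 hk.2.2.1, rfl⟩

lemma ncard_componentsOf_sublevel (m : ℕ) (c : ℕ → ℝ) (u : ℝ) :
    (componentsOf (sublevel m c u)).ncard = (runStarts m c u).ncard := by
  rw [componentsOf_sublevel_eq_image,
    (injOn_connectedComponentIn_sublevel_runStarts m c u).ncard_image]

lemma runStarts_eq_insert_of_isLocMax {m i : ℕ} {c : ℕ → ℝ} (hi : IsLocMax m c i) {s t : ℝ}
    (hs : s < c i) (ht : c i ≤ t) (hgap : ∀ k, 1 ≤ k → k ≤ m → k ≠ i → c k ∉ Icc s t) :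
    runStarts m c s = insert (i + 1) (runStarts m c t) := by
  obtain ⟨hi1, him, hleft, hright⟩ := hi
  have hle_iff : ∀ k, 1 ≤ k → k ≤ m → k ≠ i → (c k ≤ s ↔ c k ≤ t) := fun k h1 h2 hk =>
    ⟨fun h => by linarith, fun h => not_lt.1 fun h' => hgap k h1 h2 hk ⟨h'.le, h⟩⟩
  have hsucc : i + 1 ∈ runStarts m c s :=
    ⟨by omega, him, (hle_iff (i + 1) (by omega) him (by omega)).2 (by linarith),
      Or.inr (by simpa using hs)⟩
  have hself : ∀ u, i ∉ runStarts m c u := by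
    rintro u ⟨-, -, hiu, hstart⟩
    rcases hstart with h | h
    · omega
    · linarith
  ext k
  rw [mem_insert_iff]
  rcases eq_or_ne k (i + 1) with rfl | hk
  · simp [hsucc]
  rcases eq_or_ne k i with rfl | hki
  · simp [hself s, hself t]
  rw [or_iff_right hk]
  refine and_congr_right fun h1 => and_congr_right fun h2 =>
    and_congr (hle_iff k h1 h2 hki) (or_congr_right' fun hk1 => ?_)
  simpa only [not_le] using not_congr (hle_iff (k - 1) (by omega) (by omega) (by omega))

theorem statement14_general (m : ℕ) (c : ℕ → ℝ)
    (i : ℕ) (hi : IsLocMax m c i)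
    (s t : ℝ) (hs : s < c i) (ht : c i ≤ t)
    (hgap : ∀ k, 1 ≤ k → k ≤ m → k ≠ i → c k ∉ Set.Icc s t) :
    (componentsOf (sublevel m c t)).ncard + 1 = (componentsOf (sublevel m c s)).ncard := by
  rw [ncard_componentsOf_sublevel, ncard_componentsOf_sublevel,
    runStarts_eq_insert_of_isLocMax hi hs ht hgap,
    ncard_insert_of_notMem (add_one_notMem_runStarts hi.1.le ht) (runStarts_finite m c t)]

/-- Passing a value of an interior local maximum decreases the number
of connected components of the sublevel set by one. -/
theorem statement14 (m : ℕ) (hm : 2 ≤ m) (c : ℕ → ℝ)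
    (hgen : Set.InjOn c (Set.Icc 1 m))
    (i : ℕ) (hi : IsLocMax m c i)
    (s t : ℝ) (hs : s < c i) (ht : c i ≤ t)
    (hgap : ∀ k, 1 ≤ k → k ≤ m → k ≠ i → c k ∉ Set.Icc s t) :
    (componentsOf (sublevel m c t)).ncard + 1 = (componentsOf (sublevel m c s)).ncard :=
  statement14_general m c i hi s t hs ht hgap
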